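/- arXiv:2412.09793 — 3 statements merged into one kernel-verified Lean document; each statement's English description precedes it below -/
import Mathlib

section
/- Let W₁,...,W_m be i.i.d. Bernoulli(a·log n/n) and Z₁,...,Z_m be i.i.d. Bernoulli(b·log n/n), all independent, with a > b > 0 and m = δn/2 for δ ∈ (0,1). Then P(Σ_{i=1}^m (Wᵢ - Zᵢ) ≤ 0) ≤ exp(-(δ/2)·(√a - √b)²·log n) = n^{-δ(√a-√b)²/2}. -/
/-!
Chernoff's method: for `t ≤ 0`, `P(∑ Wᵢ - ∑ Zᵢ ≤ 0) ≤ E exp (t (∑ Wᵢ - ∑ Zᵢ))`, which by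
independence factors into Bernoulli moment generating functions
`1 + p (eᵗ - 1) ≤ exp (p (eᵗ - 1))`. The resulting exponent
`m log n / n · (a (eᵗ - 1) + b (e⁻ᵗ - 1))` is minimised at `eᵗ = √b / √a`,
where `a (eᵗ - 1) + b (e⁻ᵗ - 1) = 2√(ab) - a - b = -(√a - √b)²`.
-/

open MeasureTheory ProbabilityTheory Real

namespace ProbabilityTheory

variable {Ω : Type*} [MeasurableSpace Ω] {μ : Measure Ω}

lemma mgf_of_zero_or_one [IsProbabilityMeasure μ] {X : Ω → ℝ} (hX : Measurable X)
    (hval : ∀ ω, X ω = 0 ∨ X ω = 1) (t : ℝ) :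
    mgf X μ t = 1 + μ.real {ω | X ω = 1} * (exp t - 1) := by
  have hone : MeasurableSet {ω | X ω = 1} := hX (measurableSet_singleton 1)
  have hexp : (fun ω ↦ exp (t * X ω)) =
      fun ω ↦ 1 + {ω | X ω = 1}.indicator (fun _ ↦ exp t - 1) ω := by
    funext ω
    rcases hval ω with h | h <;> simp [h]
  rw [mgf, hexp, integral_add (integrable_const 1) ((integrable_const _).indicator hone),
    integral_indicator_const _ hone]
  simp [mul_comm]

lemma mgf_le_exp_of_zero_or_one [IsProbabilityMeasure μ] {X : Ω → ℝ} (hX : Measurable X)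
    (hval : ∀ ω, X ω = 0 ∨ X ω = 1) (t : ℝ) :
    mgf X μ t ≤ exp (μ.real {ω | X ω = 1} * (exp t - 1)) := by
  rw [mgf_of_zero_or_one hX hval, add_comm]
  exact add_one_le_exp _

lemma measure_sum_le_le_exp_mul_prod_mgf [IsFiniteMeasure μ] {ι : Type*} [Fintype ι]
    {Y : ι → Ω → ℝ} (hindep : iIndepFun Y μ) (hY : ∀ i, Measurable (Y i)) (ε : ℝ) {t : ℝ}
    (ht : t ≤ 0) (hint : ∀ i, Integrable (fun ω ↦ exp (t * Y i ω)) μ) :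
    μ.real {ω | ∑ i, Y i ω ≤ ε} ≤ exp (-t * ε) * ∏ i, mgf (Y i) μ t := by
  have h := measure_le_le_exp_mul_mgf ε ht
    (hindep.integrable_exp_mul_sum hY (s := Finset.univ) fun i _ ↦ hint i)
  rwa [hindep.mgf_sum hY, Finset.sum_fn] at h

lemma measure_sum_sub_sum_nonpos_le [IsProbabilityMeasure μ] {ι κ : Type*} [Fintype ι]
    [Fintype κ] {W : ι → Ω → ℝ} {Z : κ → Ω → ℝ} (hindep : iIndepFun (Sum.elim W Z) μ)
    (hW : ∀ i, Measurable (W i)) (hZ : ∀ j, Measurable (Z j))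
    (hWval : ∀ i ω, W i ω = 0 ∨ W i ω = 1) (hZval : ∀ j ω, Z j ω = 0 ∨ Z j ω = 1)
    {t : ℝ} (ht : t ≤ 0) :
    μ.real {ω | ∑ i, W i ω - ∑ j, Z j ω ≤ 0} ≤
      exp (∑ i, μ.real {ω | W i ω = 1} * (exp t - 1) +
        ∑ j, μ.real {ω | Z j ω = 1} * (exp (-t) - 1)) := by
  set Y : ι ⊕ κ → Ω → ℝ := Sum.elim W fun j ↦ -Z j
  have hY : ∀ k, Measurable (Y k) := by
    rintro (i | j)
    exacts [hW i, (hZ j).neg]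
  have hYindep : iIndepFun Y μ := by
    convert hindep.comp (Sum.elim (fun _ ↦ id) fun _ ↦ Neg.neg)
      (by rintro (i | j); exacts [measurable_id, measurable_neg]) using 1
    funext k
    cases k <;> rfl
  have hint : ∀ k, Integrable (fun ω ↦ exp (t * Y k ω)) μ := by
    rintro (i | j)
    · exact integrable_exp_mul_of_mem_Icc (a := 0) (b := 1) (hW i).aemeasurable
        (ae_of_all _ fun ω ↦ by rcases hWval i ω with h | h <;> simp [Y, h])
    · exact integrable_exp_mul_of_mem_Icc (a := -1) (b := 0) (hZ j).neg.aemeasurable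
        (ae_of_all _ fun ω ↦ by rcases hZval j ω with h | h <;> simp [Y, h])
  set r : ι ⊕ κ → ℝ := Sum.elim (fun i ↦ μ.real {ω | W i ω = 1} * (exp t - 1))
    fun j ↦ μ.real {ω | Z j ω = 1} * (exp (-t) - 1)
  have hmgf : ∀ k, mgf (Y k) μ t ≤ exp (r k) := by
    rintro (i | j)
    · exact mgf_le_exp_of_zero_or_one (hW i) (hWval i) t
    · exact (mgf_neg (X := Z j)).trans_le (mgf_le_exp_of_zero_or_one (hZ j) (hZval j) (-t))
  calc μ.real {ω | ∑ i, W i ω - ∑ j, Z j ω ≤ 0}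
      = μ.real {ω | ∑ k, Y k ω ≤ 0} := by
        simp [Y, Fintype.sum_sum_type, sub_eq_add_neg]
    _ ≤ ∏ k, mgf (Y k) μ t := by
        simpa using measure_sum_le_le_exp_mul_prod_mgf hYindep hY 0 ht hint
    _ ≤ ∏ k, exp (r k) := Finset.prod_le_prod (fun k _ ↦ mgf_nonneg) fun k _ ↦ hmgf k
    _ = _ := by rw [← exp_sum, Fintype.sum_sum_type]; rfl

end ProbabilityTheory

lemma mul_exp_sub_one_add_mul_exp_neg_sub_one_at_log_sqrt_div {a b : ℝ} (ha : 0 < a)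
    (hb : 0 < b) :
    a * (exp (log (√b / √a)) - 1) + b * (exp (-log (√b / √a)) - 1) = -(√a - √b) ^ 2 := by
  rw [exp_neg, exp_log (by positivity)]
  field_simp
  linear_combination (√a - √b) * √b * sq_sqrt ha.le - (√a - √b) * √a * sq_sqrt hb.le

theorem simple_voting_error_bound_general
    (n m : ℕ) (a b δ : ℝ) (hb : 0 < b) (hab : b < a)
    (hm : (m : ℝ) = δ * n / 2) (hn : 2 ≤ n)
    {Ω : Type*} [MeasurableSpace Ω] (μ : Measure Ω) [IsProbabilityMeasure μ]
    (W Z : Fin m → Ω → ℝ)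
    (hWmeas : ∀ i, Measurable (W i)) (hZmeas : ∀ i, Measurable (Z i))
    (hWval : ∀ i, ∀ ω, W i ω = 0 ∨ W i ω = 1)
    (hZval : ∀ i, ∀ ω, Z i ω = 0 ∨ Z i ω = 1)
    (hWp : ∀ i, μ {ω | W i ω = 1} = ENNReal.ofReal (a * Real.log n / n))
    (hZq : ∀ i, μ {ω | Z i ω = 1} = ENNReal.ofReal (b * Real.log n / n))
    (hindep : iIndepFun
      (Sum.elim W Z) μ) :
    (μ {ω | ∑ i, (W i ω - Z i ω) ≤ 0}).toReal ≤
      Real.exp (-(δ / 2) * (Real.sqrt a - Real.sqrt b)^2 * Real.log n) := by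
  have ha : 0 < a := hb.trans hab
  have hn0 : (n : ℝ) ≠ 0 := by positivity
  have hlog : 0 ≤ Real.log n := Real.log_natCast_nonneg n
  set t := log (√b / √a)
  have ht : t ≤ 0 :=
    log_nonpos (by positivity) (div_le_one_of_le₀ (sqrt_le_sqrt hab.le) (sqrt_nonneg a))
  have hWreal : ∀ i, μ.real {ω | W i ω = 1} = a * log n / n := fun i ↦ by
    rw [measureReal_def, hWp i, ENNReal.toReal_ofReal (by positivity)]
  have hZreal : ∀ i, μ.real {ω | Z i ω = 1} = b * log n / n := fun i ↦ by
    rw [measureReal_def, hZq i, ENNReal.toReal_ofReal (by positivity)]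
  have hexponent : ∑ _i : Fin m, a * log n / n * (exp t - 1) +
      ∑ _i : Fin m, b * log n / n * (exp (-t) - 1) = -(δ / 2) * (√a - √b) ^ 2 * log n := by
    simp only [Finset.sum_const, Finset.card_univ, Fintype.card_fin, nsmul_eq_mul]
    calc (m : ℝ) * (a * log n / n * (exp t - 1)) + m * (b * log n / n * (exp (-t) - 1))
        = m / n * log n * (a * (exp t - 1) + b * (exp (-t) - 1)) := by ring
      _ = _ := by
        rw [mul_exp_sub_one_add_mul_exp_neg_sub_one_at_log_sqrt_div ha hb, hm]
        field_simp
  rw [← measureReal_def]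
  simp_rw [Finset.sum_sub_distrib]
  simpa only [hWreal, hZreal, hexponent] using
    measure_sum_sub_sum_nonpos_le hindep hWmeas hZmeas hWval hZval ht

/-- Error-rate bound for the simple voting estimator: if `W i` are i.i.d.
Bernoulli(a log n/n) and `Z i` are i.i.d. Bernoulli(b log n/n), all independent,
with `a > b > 0` and `m = δn/2`, then
`P(Σ (Wᵢ - Zᵢ) ≤ 0) ≤ n^{-δ(√a-√b)²/2}`. -/
theorem simple_voting_error_bound
    (n m : ℕ) (a b δ : ℝ) (hb : 0 < b) (hab : b < a) (hδ : δ ∈ Set.Ioo (0:ℝ) 1)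
    (hm : (m : ℝ) = δ * n / 2) (hn : 2 ≤ n)
    (hp1 : a * Real.log n / n ≤ 1)
    {Ω : Type*} [MeasurableSpace Ω] (μ : Measure Ω) [IsProbabilityMeasure μ]
    (W Z : Fin m → Ω → ℝ)
    (hWmeas : ∀ i, Measurable (W i)) (hZmeas : ∀ i, Measurable (Z i))
    (hWval : ∀ i, ∀ ω, W i ω = 0 ∨ W i ω = 1)
    (hZval : ∀ i, ∀ ω, Z i ω = 0 ∨ Z i ω = 1)
    (hWp : ∀ i, μ {ω | W i ω = 1} = ENNReal.ofReal (a * Real.log n / n))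
    (hZq : ∀ i, μ {ω | Z i ω = 1} = ENNReal.ofReal (b * Real.log n / n))
    (hindep : iIndepFun
      (Sum.elim W Z) μ) :
    (μ {ω | ∑ i, (W i ω - Z i ω) ≤ 0}).toReal ≤
      Real.exp (-(δ / 2) * (Real.sqrt a - Real.sqrt b)^2 * Real.log n) :=
  simple_voting_error_bound_general n m a b δ hb hab hm hn μ W Z hWmeas hZmeas hWval hZval hWp hZq
    hindep
end

section
/- Let a > b > 0 and δ ∈ (0,1), and let ρ be the positive root of ρ² - (aδ/b)ρ - (1-δ) = 0. Define I(α,β) = (1/2)·sup_{θ>0} [ a + b - (1-δ)a·e^{-θα} - (1-δ)b·e^{θα} - δa·e^{-θβ} - δb·e^{θβ} ]. Then I(ρ-1, ρ-1) = (1/2)·sup_{θ>0}[a + b - a·e^{-θ(ρ-1)} - b·e^{θ(ρ-1)}] = (√a - √b)²/2. -/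
open Real

lemma aux_bound (a b : ℝ) (ha : 0 < a) (hb : 0 < b) (t : ℝ) :
    a + b - a * Real.exp (-t) - b * Real.exp t ≤ (Real.sqrt a - Real.sqrt b)^2 := by
  have hx : (0:ℝ) ≤ a * Real.exp (-t) := by positivity
  have hy : (0:ℝ) ≤ b * Real.exp t := by positivity
  have hp := Real.sq_sqrt hx
  have hq := Real.sq_sqrt hy
  have hmul : a * Real.exp (-t) * (b * Real.exp t) = a * b := by
    rw [mul_mul_mul_comm, ← Real.exp_add, neg_add_cancel, Real.exp_zero, mul_one]
  have hpq : Real.sqrt (a * Real.exp (-t)) * Real.sqrt (b * Real.exp t)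
      = Real.sqrt a * Real.sqrt b := by
    rw [← Real.sqrt_mul hx, hmul, Real.sqrt_mul ha.le]
  nlinarith [sq_nonneg (Real.sqrt (a * Real.exp (-t)) - Real.sqrt (b * Real.exp t)),
    Real.sq_sqrt ha.le, Real.sq_sqrt hb.le]

lemma aux_sup (a b α : ℝ) (hb : 0 < b) (hab : b < a) (hα : 0 < α) :
    sSup ((fun θ => a + b - a * Real.exp (-(θ * α)) - b * Real.exp (θ * α)) '' Set.Ioi (0:ℝ))
      = (Real.sqrt a - Real.sqrt b)^2 := by
  have ha : 0 < a := hb.trans hab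
  have hsa : 0 < Real.sqrt a := Real.sqrt_pos.2 ha
  have hsb : 0 < Real.sqrt b := Real.sqrt_pos.2 hb
  have hbdd : ∀ x ∈ ((fun θ => a + b - a * Real.exp (-(θ * α)) - b * Real.exp (θ * α)) ''
      Set.Ioi (0:ℝ)), x ≤ (Real.sqrt a - Real.sqrt b)^2 := by
    rintro x ⟨θ, hθ, rfl⟩
    exact aux_bound a b ha hb (θ * α)
  have hlog : 0 < Real.log (a / b) := Real.log_pos ((one_lt_div hb).2 hab)
  set t0 : ℝ := Real.log (a / b) / 2 with ht0
  have ht0pos : 0 < t0 := by positivity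
  have hexp2 : Real.exp t0 ^ 2 = a / b := by
    rw [sq, ← Real.exp_add, ht0,
      show Real.log (a/b)/2 + Real.log (a/b)/2 = Real.log (a/b) by ring]
    exact Real.exp_log (by positivity)
  have hexp : Real.exp t0 = Real.sqrt a / Real.sqrt b := by
    rw [show Real.exp t0 = Real.sqrt (Real.exp t0 ^ 2) from
      (Real.sqrt_sq (Real.exp_pos _).le).symm, hexp2, Real.sqrt_div ha.le]
  have hexpneg : Real.exp (-t0) = Real.sqrt b / Real.sqrt a := by
    rw [Real.exp_neg, hexp]
    field_simp
  -- value at the maximizer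
  have hval : a + b - a * Real.exp (-t0) - b * Real.exp t0
      = (Real.sqrt a - Real.sqrt b)^2 := by
    rw [hexp, hexpneg]
    have hA : Real.sqrt a * Real.sqrt a = a := Real.mul_self_sqrt ha.le
    have hB : Real.sqrt b * Real.sqrt b = b := Real.mul_self_sqrt hb.le
    have h1 : a * (Real.sqrt b / Real.sqrt a) = Real.sqrt a * Real.sqrt b := by
      rw [← mul_div_assoc, div_eq_iff hsa.ne']
      linear_combination (-Real.sqrt b) * hA
    have h2 : b * (Real.sqrt a / Real.sqrt b) = Real.sqrt a * Real.sqrt b := by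
      rw [← mul_div_assoc, div_eq_iff hsb.ne']
      linear_combination (-Real.sqrt a) * hB
    rw [h1, h2]
    have := Real.sq_sqrt ha.le
    have := Real.sq_sqrt hb.le
    nlinarith
  have hmem : (Real.sqrt a - Real.sqrt b)^2 ∈
      ((fun θ => a + b - a * Real.exp (-(θ * α)) - b * Real.exp (θ * α)) '' Set.Ioi (0:ℝ)) := by
    refine ⟨t0 / α, Set.mem_Ioi.2 (by positivity), ?_⟩
    have : t0 / α * α = t0 := by field_simp
    simp only [this, hval]
  refine le_antisymm (csSup_le ⟨_, hmem⟩ hbdd) (le_csSup ⟨_, hbdd⟩ hmem)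

/-- With `ρ` the positive root of `ρ² - (aδ/b)ρ - (1-δ) = 0`, the mixed-estimator
exponent collapses: `I(ρ-1, ρ-1) = (1/2)·sup_{θ>0}[a+b-a e^{-θ(ρ-1)}-b e^{θ(ρ-1)}]
= (√a - √b)²/2`. -/
theorem mixed_exponent_value
    (a b δ ρ : ℝ) (hb : 0 < b) (hab : b < a) (hδ : δ ∈ Set.Ioo (0:ℝ) 1)
    (hρpos : 0 < ρ) (hρ : ρ^2 - (a * δ / b) * ρ - (1 - δ) = 0)
    (I : ℝ → ℝ → ℝ)
    (hI : ∀ α β : ℝ, I α β = (1/2) * sSup ((fun θ =>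
      a + b - (1 - δ) * a * Real.exp (-(θ * α)) - (1 - δ) * b * Real.exp (θ * α)
        - δ * a * Real.exp (-(θ * β)) - δ * b * Real.exp (θ * β)) '' Set.Ioi (0:ℝ))) :
    I (ρ - 1) (ρ - 1) =
        (1/2) * sSup ((fun θ =>
          a + b - a * Real.exp (-(θ * (ρ - 1))) - b * Real.exp (θ * (ρ - 1))) ''
            Set.Ioi (0:ℝ)) ∧
      I (ρ - 1) (ρ - 1) = (Real.sqrt a - Real.sqrt b)^2 / 2 := by
  have ha : 0 < a := hb.trans hab
  obtain ⟨hδ0, hδ1⟩ := hδ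
  -- ρ > 1
  have hbne : b ≠ 0 := hb.ne'
  have hρb : b * ρ^2 - a * δ * ρ - b * (1 - δ) = 0 := by
    field_simp at hρ
    linarith
  have hρ1 : 1 < ρ := by
    by_contra h
    push_neg at h
    nlinarith [mul_nonneg (mul_nonneg hb.le hρpos.le) (sub_nonneg.2 h),
      mul_pos (mul_pos (sub_pos.2 hab) hδ0) hρpos,
      mul_nonneg (mul_nonneg hb.le (sub_nonneg.2 hδ1.le)) (sub_nonneg.2 h)]
  have hα : 0 < ρ - 1 := by linarith
  -- the two functions coincide
  have hfun : (fun θ =>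
      a + b - (1 - δ) * a * Real.exp (-(θ * (ρ-1))) - (1 - δ) * b * Real.exp (θ * (ρ-1))
        - δ * a * Real.exp (-(θ * (ρ-1))) - δ * b * Real.exp (θ * (ρ-1)))
      = (fun θ => a + b - a * Real.exp (-(θ * (ρ-1))) - b * Real.exp (θ * (ρ-1))) := by
    funext θ
    ring
  have h1 : I (ρ - 1) (ρ - 1) =
      (1/2) * sSup ((fun θ =>
        a + b - a * Real.exp (-(θ * (ρ - 1))) - b * Real.exp (θ * (ρ - 1))) ''
          Set.Ioi (0:ℝ)) := by
    rw [hI, hfun]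
  refine ⟨h1, ?_⟩
  rw [h1, aux_sup a b (ρ - 1) hb hab hα]
  ring
end

section
/- Let x = √k·‖w‖_∞ and y = ‖w‖₂ for a nonzero vector w ∈ ℝ^k, and let φ(t) = (max(1, log(1/t)))^{-1} for t > 0. Then for any n ≥ 3, x·φ(y/x) ≤ x·φ(1/√(log n)) + y·√(log n)·φ(1/√(log n)), where we use that φ is monotone increasing and t ↦ φ(t)/t is monotone decreasing on (0,∞). -/
open Real

/-- `u ↦ u * max 1 (log (1/u))` is monotone on `(0,∞)`. -/
lemma uM_mono (s t : ℝ) (hs : 0 < s) (hst : s ≤ t) :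
    s * max 1 (Real.log (1 / s)) ≤ t * max 1 (Real.log (1 / t)) := by
  have ht : 0 < t := lt_of_lt_of_le hs hst
  by_cases h1 : 1 ≤ Real.log (1 / t)
  · have h2 : 1 ≤ Real.log (1 / s) := by
      refine le_trans h1 (Real.log_le_log (by positivity) ?_)
      exact one_div_le_one_div_of_le hs hst
    rw [max_eq_right h1, max_eq_right h2]
    have hsplit : Real.log (1 / s) = Real.log (t / s) + Real.log (1 / t) := by
      rw [← Real.log_mul (by positivity) (by positivity)]
      congr 1
      field_simp
    have hlog : Real.log (t / s) ≤ t / s - 1 :=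
      Real.log_le_sub_one_of_pos (by positivity)
    have h3 : s * Real.log (t / s) ≤ t - s := by
      have := mul_le_mul_of_nonneg_left hlog hs.le
      calc s * Real.log (t / s) ≤ s * (t / s - 1) := this
        _ = t - s := by field_simp
    nlinarith [mul_le_mul_of_nonneg_left h1 (sub_nonneg.mpr hst)]
  · push_neg at h1
    rw [max_eq_left h1.le]
    by_cases h2 : 1 ≤ Real.log (1 / s)
    · rw [max_eq_right h2]
      -- s log(1/s) ≤ 1/e ≤ t
      have he : (0:ℝ) < Real.exp 1 := Real.exp_pos 1
      have hts : (Real.exp 1)⁻¹ < t := by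
        have h1t : 1 / t < Real.exp 1 := by
          have := Real.exp_lt_exp.mpr h1
          rwa [Real.exp_log (by positivity)] at this
        have hone : 1 < t * Real.exp 1 := by
          have := (div_lt_iff₀ ht).mp h1t
          nlinarith
        have := inv_mul_cancel₀ (ne_of_gt he)
        nlinarith
      have hne : (1:ℝ) / (Real.exp 1 * s) ≠ 0 := by positivity
      have hls : Real.log (1 / s) ≤ 1 / (Real.exp 1 * s) := by
        have hfact : (1:ℝ)/s = Real.exp 1 * (1/(Real.exp 1 * s)) := by field_simp
        have heq : Real.log (1 / s) = 1 + Real.log (1 / (Real.exp 1 * s)) := by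
          rw [hfact, Real.log_mul (Real.exp_ne_zero 1) hne, Real.log_exp]
        rw [heq]
        have := Real.log_le_sub_one_of_pos (show (0:ℝ) < 1 / (Real.exp 1 * s) by positivity)
        linarith
      have : s * Real.log (1 / s) ≤ (Real.exp 1)⁻¹ := by
        calc s * Real.log (1 / s) ≤ s * (1 / (Real.exp 1 * s)) :=
              mul_le_mul_of_nonneg_left hls hs.le
          _ = (Real.exp 1)⁻¹ := by field_simp
      linarith
    · push_neg at h2
      rw [max_eq_left h2.le]
      linarith

/-- Key analytic inequality in the row-concentration argument: with
`x = √k‖w‖_∞`, `y = ‖w‖₂`, and `φ(t) = (max(1, log(1/t)))⁻¹`, for `n ≥ 3`,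
`x·φ(y/x) ≤ x·φ(1/√(log n)) + y·√(log n)·φ(1/√(log n))`. -/
theorem phi_split_inequality
    (k : ℕ) (hk : 0 < k) (w : Fin k → ℝ) (hw : w ≠ 0)
    (x y : ℝ)
    (hx : x = Real.sqrt k * (⨆ i, |w i|))
    (hy : y = Real.sqrt (∑ i, (w i)^2))
    (φ : ℝ → ℝ) (hφ : ∀ t : ℝ, 0 < t → φ t = (max 1 (Real.log (1 / t)))⁻¹)
    (n : ℕ) (hn : 3 ≤ n) :
    x * φ (y / x) ≤ x * φ (1 / Real.sqrt (Real.log n))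
      + y * Real.sqrt (Real.log n) * φ (1 / Real.sqrt (Real.log n)) := by
  -- basic positivity
  obtain ⟨i0, hi0⟩ : ∃ i, w i ≠ 0 := Function.ne_iff.mp hw
  haveI : Nonempty (Fin k) := ⟨⟨0, hk⟩⟩
  have hxpos : 0 < x := by
    rw [hx]
    have h1 : (0:ℝ) < Real.sqrt k := Real.sqrt_pos.mpr (by exact_mod_cast hk)
    have h2 : |w i0| ≤ ⨆ i, |w i| :=
      le_ciSup (f := fun i => |w i|) (Set.Finite.bddAbove (Set.finite_range _)) i0
    have : 0 < ⨆ i, |w i| := lt_of_lt_of_le (abs_pos.mpr hi0) h2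
    positivity
  have hypos : 0 < y := by
    rw [hy]
    refine Real.sqrt_pos.mpr ?_
    have h2 : (w i0)^2 ≤ ∑ i, (w i)^2 :=
      Finset.single_le_sum (fun i _ => sq_nonneg (w i)) (Finset.mem_univ i0)
    have h0 : 0 < (w i0)^2 :=
      lt_of_le_of_ne (sq_nonneg _) (Ne.symm (pow_ne_zero 2 hi0))
    linarith
  have hL : 1 < Real.log n := by
    have h3 : Real.exp 1 < 3 := by
      have := Real.exp_one_lt_d9
      linarith
    have : Real.exp 1 < (n:ℝ) := lt_of_lt_of_le h3 (by exact_mod_cast hn)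
    calc (1:ℝ) = Real.log (Real.exp 1) := (Real.log_exp 1).symm
      _ < Real.log n := Real.log_lt_log (Real.exp_pos 1) this
  have hLpos : 0 < Real.log n := by linarith
  set L := Real.sqrt (Real.log n) with hLdef
  have hLs : 0 < L := Real.sqrt_pos.mpr hLpos
  have hs0 : (0:ℝ) < 1 / L := by positivity
  have htpos : 0 < y / x := by positivity
  rw [hφ _ htpos, hφ _ hs0]
  set M1 := max 1 (Real.log (1 / (y / x))) with hM1
  set M2 := max 1 (Real.log (1 / (1 / L))) with hM2
  have hM1pos : (0:ℝ) < M1 := lt_of_lt_of_le one_pos (le_max_left _ _)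
  have hM2pos : (0:ℝ) < M2 := lt_of_lt_of_le one_pos (le_max_left _ _)
  by_cases hc : y / x ≤ 1 / L
  · -- φ monotone: M2 ≤ M1
    have hmm : M2 ≤ M1 := by
      rw [hM1, hM2]
      exact max_le_max le_rfl
        (Real.log_le_log (by positivity) (one_div_le_one_div_of_le htpos hc))
    have hinv : M1⁻¹ ≤ M2⁻¹ := by
      exact inv_anti₀ hM2pos hmm
    have h1 : x * M1⁻¹ ≤ x * M2⁻¹ := mul_le_mul_of_nonneg_left hinv hxpos.le
    have h2 : 0 ≤ y * L * M2⁻¹ := by positivity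
    linarith
  · push_neg at hc
    have hkey := uM_mono (1 / L) (y / x) hs0 hc.le
    rw [← hM1, ← hM2] at hkey
    -- from (1/L) * M2 ≤ (y/x) * M1 derive x * M1⁻¹ ≤ y * L * M2⁻¹
    have h1 : 0 ≤ x * M2⁻¹ := by positivity
    have h2 : x * M1⁻¹ ≤ y * L * M2⁻¹ := by
      have hxne : x ≠ 0 := ne_of_gt hxpos
      have hkey' : x * ((1 / L) * M2) ≤ x * ((y / x) * M1) :=
        mul_le_mul_of_nonneg_left hkey hxpos.le
      have hkey'' : x / L * M2 ≤ y * M1 := by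
        calc x / L * M2 = x * ((1 / L) * M2) := by ring
          _ ≤ x * ((y / x) * M1) := hkey'
          _ = y * M1 := by field_simp
      have hfin : x * M2 ≤ y * L * M1 := by
        have := mul_le_mul_of_nonneg_left hkey'' hLs.le
        calc x * M2 = L * (x / L * M2) := by field_simp
          _ ≤ L * (y * M1) := this
          _ = y * L * M1 := by ring
      have := (div_le_div_iff₀ hM1pos hM2pos).mpr hfin
      simpa [div_eq_mul_inv] using this
    linarith
end
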